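/- Let d ≥ 3 be an integer and m an integer with (d+1)/3 < m ≤ d/2. Let α satisfy d-m ≤ α ≤ (d+m-1)/2, set κ = (d - α - 1)/(2(d-m-1)), and let μ be the restriction of Lebesgue measure on ℝ^d to the set Λ defined in the context (with this κ). Then there exist constants 0 < c₀ ≤ C₀ depending only on d, m, α such that for all R ≥ 2, c₀ R^{α-d} ≤ c_α(μ) ≤ C₀ R^{α-d}, where c_α(μ) := sup over x ∈ ℝ^d and r > 0 of μ(B(x,r))/r^α. -/

import Mathlib

set_option maxHeartbeats 1000000


open MeasureTheory Metric Real
open scoped ENNReal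

/-- The vector in `ℝ^n` with integer coordinates `ℓ`. -/
noncomputable def intVec {n : ℕ} (ℓ : Fin n → ℤ) : EuclideanSpace ℝ (Fin n) :=
  (EuclideanSpace.equiv (Fin n) ℝ).symm fun i => (ℓ i : ℝ)

/-- The first `m` coordinates `x'` of a vector `x ∈ ℝ^n`. -/
noncomputable def headV {n : ℕ} (m : ℕ) (h : m ≤ n) (x : EuclideanSpace ℝ (Fin n)) :
    EuclideanSpace ℝ (Fin m) :=
  (EuclideanSpace.equiv (Fin m) ℝ).symm fun i => x (Fin.castLE h i)

/-- The middle coordinates `x'' = (x_{m+1}, …, x_{d-1})` of a vector `x ∈ ℝ^d`. -/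
noncomputable def midV (d m : ℕ) (x : EuclideanSpace ℝ (Fin d)) :
    EuclideanSpace ℝ (Fin (d - m - 1)) :=
  (EuclideanSpace.equiv (Fin (d - m - 1)) ℝ).symm fun i =>
    x ⟨m + i, by have := i.isLt; omega⟩

/-- The coordinates `ξ'' = (ξ_{m+1}, …, ξ_{d-1})` of a vector `ξ ∈ ℝ^{d-1}`. -/
noncomputable def tailP (d m : ℕ) (ξ : EuclideanSpace ℝ (Fin (d - 1))) :
    EuclideanSpace ℝ (Fin (d - m - 1)) :=
  (EuclideanSpace.equiv (Fin (d - m - 1)) ℝ).symm fun i =>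
    ξ ⟨m + i, by have := i.isLt; omega⟩

/-- The set `Ω = [B^m(0, cR^{-1/2}) × (2πR^{-κ}ℤ^{d-m-1} + B^{d-m-1}(0, cR^{-1}))]
∩ B^{d-1}(0,1)`, with `c = 1/1000`. -/
noncomputable def OmegaP (d m : ℕ) (h : m ≤ d - 1) (κ R : ℝ) :
    Set (EuclideanSpace ℝ (Fin (d - 1))) :=
  {ξ | ξ ∈ ball (0 : EuclideanSpace ℝ (Fin (d - 1))) 1 ∧
    ‖headV m h ξ‖ < (1 / 1000) * R ^ (-(1 : ℝ) / 2) ∧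
    ∃ n : Fin (d - m - 1) → ℤ,
      ‖tailP d m ξ - (2 * π * R ^ (-κ)) • intVec n‖ < (1 / 1000) * R ^ (-(1 : ℝ))}

/-- The set `Λ = [B^m(0, cR^{-1/2}) × (R^{κ-1}ℤ^{d-m-1} + B^{d-m-1}(0, cR^{-1}))
× ((1/2π)R^{2κ-1}ℤ + (-cR^{-1}, cR^{-1}))] ∩ B^d(0,1)`, with `c = 1/1000`. -/
noncomputable def LambdaP (d m : ℕ) (hm : m ≤ d) (hd : 0 < d) (κ R : ℝ) :
    Set (EuclideanSpace ℝ (Fin d)) :=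
  {x | x ∈ ball (0 : EuclideanSpace ℝ (Fin d)) 1 ∧
    ‖headV m hm x‖ < (1 / 1000) * R ^ (-(1 : ℝ) / 2) ∧
    (∃ ℓ : Fin (d - m - 1) → ℤ,
      ‖midV d m x - R ^ (κ - 1) • intVec ℓ‖ < (1 / 1000) * R ^ (-(1 : ℝ))) ∧
    ∃ k : ℤ,
      |x ⟨d - 1, by omega⟩ - (1 / (2 * π)) * R ^ (2 * κ - 1) * k| <
        (1 / 1000) * R ^ (-(1 : ℝ))}

/-- `c_α(μ) = sup_{x, r>0} μ(B(x,r)) / r^α`, valued in `ℝ≥0∞`. -/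
noncomputable def cAlpha {d : ℕ} (α : ℝ) (μ : Measure (EuclideanSpace ℝ (Fin d))) : ℝ≥0∞ :=
  ⨆ (x : EuclideanSpace ℝ (Fin d)) (r : ℝ) (_ : 0 < r),
    μ (ball x r) / ENNReal.ofReal (r ^ α)



lemma sq_sum_le {d k : ℕ} (g : Fin k → Fin d) (hg : Function.Injective g)
    (x : EuclideanSpace ℝ (Fin d)) :
    ∑ i, ‖x (g i)‖ ^ 2 ≤ ∑ j, ‖x j‖ ^ 2 := by
  have h := Finset.sum_image (s := (Finset.univ : Finset (Fin k))) (g := g)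
    (f := fun j => ‖x j‖ ^ 2) (fun a _ b _ h => hg h)
  rw [← h]
  exact Finset.sum_le_sum_of_subset_of_nonneg (Finset.subset_univ _)
    (fun j _ _ => sq_nonneg _)

lemma coord_abs_le_norm {n : ℕ} (x : EuclideanSpace ℝ (Fin n)) (i : Fin n) :
    |x i| ≤ ‖x‖ := by
  rw [EuclideanSpace.norm_eq]
  have h : |x i| ^ 2 ≤ ∑ j, ‖x j‖ ^ 2 := by
    simpa [Real.norm_eq_abs] using
      Finset.single_le_sum (f := fun j => ‖x j‖ ^ 2) (fun j _ => sq_nonneg _)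
        (Finset.mem_univ i)
  calc |x i| = Real.sqrt (|x i| ^ 2) := (Real.sqrt_sq (abs_nonneg _)).symm
  _ ≤ _ := Real.sqrt_le_sqrt h

lemma norm_subvec_le {d k : ℕ} (g : Fin k → Fin d) (hg : Function.Injective g)
    (x : EuclideanSpace ℝ (Fin d)) :
    ‖(EuclideanSpace.equiv (Fin k) ℝ).symm (fun i => x (g i))‖ ≤ ‖x‖ := by
  rw [EuclideanSpace.norm_eq, EuclideanSpace.norm_eq]
  apply Real.sqrt_le_sqrt
  exact sq_sum_le g hg x

lemma volume_pi_set {d : ℕ} (I : Fin d → Set ℝ) (hI : ∀ i, MeasurableSet (I i)) :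
    volume {y : EuclideanSpace ℝ (Fin d) | ∀ i, y i ∈ I i} = ∏ i, volume (I i) := by
  have hmp := EuclideanSpace.volume_preserving_symm_measurableEquiv_toLp (Fin d)
  have hset : {y : EuclideanSpace ℝ (Fin d) | ∀ i, y i ∈ I i}
      = (MeasurableEquiv.toLp 2 (Fin d → ℝ)).symm ⁻¹' (Set.pi Set.univ I) := by
    ext y
    simp [Set.mem_pi]
  rw [hset, hmp.measure_preimage (MeasurableSet.univ_pi hI).nullMeasurableSet,
    volume_pi_pi]


lemma lattice_count (a ε z r : ℝ) (ha : 0 < a) (hε : 0 < ε) (hr : 0 ≤ r) :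
    volume (Set.Ioo (z - r) (z + r) ∩ ⋃ t : ℤ, ball (a * t) ε)
      ≤ ENNReal.ofReal ((2 * (r + ε) / a + 1) * (2 * ε)) := by
  set p : ℤ := ⌈(z - r - ε) / a⌉ with hp
  set q : ℤ := ⌊(z + r + ε) / a⌋ with hq
  have hsub : Set.Ioo (z - r) (z + r) ∩ ⋃ t : ℤ, ball (a * t) ε ⊆
      ⋃ t ∈ (Finset.Icc p q : Finset ℤ), ball (a * t) ε := by
    rintro y ⟨hy1, hy2⟩
    simp only [Set.mem_iUnion, mem_ball, Real.dist_eq] at hy2 ⊢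
    obtain ⟨t, ht⟩ := hy2
    have h1 : z - r - ε < a * t := by
      have := abs_lt.mp ht
      have := hy1.1
      nlinarith [this]
    have h2 : a * t < z + r + ε := by
      have := abs_lt.mp ht
      have := hy1.2
      nlinarith [this]
    refine ⟨t, ?_, ht⟩
    rw [Finset.mem_Icc]
    constructor
    · rw [hp]
      apply Int.ceil_le.mpr
      rw [div_le_iff₀ ha]
      nlinarith
    · rw [hq]
      apply Int.le_floor.mpr
      rw [le_div_iff₀ ha]
      nlinarith
  calc volume (Set.Ioo (z - r) (z + r) ∩ ⋃ t : ℤ, ball (a * t) ε)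
      ≤ volume (⋃ t ∈ (Finset.Icc p q : Finset ℤ), ball (a * t) ε) :=
        measure_mono hsub
    _ ≤ ∑ t ∈ Finset.Icc p q, volume (ball (a * t) ε) := measure_biUnion_finset_le _ _
    _ = (Finset.Icc p q).card * ENNReal.ofReal (2 * ε) := by
        simp [Real.volume_ball, Finset.sum_const, nsmul_eq_mul]
    _ ≤ ENNReal.ofReal (2 * (r + ε) / a + 1) * ENNReal.ofReal (2 * ε) := by
        gcongr
        have hcard : ((Finset.Icc p q).card : ℝ) ≤ 2 * (r + ε) / a + 1 := by
          rw [Int.card_Icc]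
          rcases le_or_gt (q + 1 - p) 0 with h | h
          · rw [Int.toNat_of_nonpos h]
            push_cast
            positivity
          · have hc : (((q + 1 - p).toNat : ℤ) : ℝ) = (q : ℝ) + 1 - (p : ℝ) := by
              rw [Int.toNat_of_nonneg h.le]; push_cast; ring
            have hc' : (((q + 1 - p).toNat : ℕ) : ℝ) = (q : ℝ) + 1 - (p : ℝ) := by
              exact_mod_cast hc
            rw [hc']
            have h1 : (q : ℝ) ≤ (z + r + ε) / a := Int.floor_le _
            have h2 : (z - r - ε) / a ≤ (p : ℝ) := Int.le_ceil _
            have h3 : (z + r + ε) / a - (z - r - ε) / a = 2 * (r + ε) / a := by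
              ring
            linarith
        calc ((Finset.Icc p q).card : ℝ≥0∞)
            = ENNReal.ofReal ((Finset.Icc p q).card : ℝ) := by
              simp [ENNReal.ofReal_natCast]
          _ ≤ _ := ENNReal.ofReal_le_ofReal hcard
    _ ≤ ENNReal.ofReal ((2 * (r + ε) / a + 1) * (2 * ε)) := by
        rw [← ENNReal.ofReal_mul (by positivity)]

lemma interval_lattice_bound (a ε z r : ℝ) (ha : 0 < a) (hε : 0 < ε) (hr : 0 < r) :
    volume (Set.Ioo (z - r) (z + r) ∩ ⋃ t : ℤ, ball (a * t) ε)
      ≤ ENNReal.ofReal (min (2 * r) ((2 * (r + ε) / a + 1) * (2 * ε))) := by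
  rcases min_cases (2 * r) ((2 * (r + ε) / a + 1) * (2 * ε)) with ⟨h1, _⟩ | ⟨h1, _⟩ <;>
    rw [h1]
  · calc volume (Set.Ioo (z - r) (z + r) ∩ ⋃ t : ℤ, ball (a * t) ε)
        ≤ volume (Set.Ioo (z - r) (z + r)) := measure_mono Set.inter_subset_left
      _ = ENNReal.ofReal (2 * r) := by rw [Real.volume_Ioo]; ring_nf
  · exact lattice_count a ε z r ha hε hr.le


lemma rpow_bridge (R r p s : ℝ) (hR : 1 ≤ R) (hr : 0 < r)
    (h : (0 ≤ p ∧ r ≤ R ^ s) ∨ (p ≤ 0 ∧ R ^ s ≤ r)) : r ^ p ≤ R ^ (s * p) := by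
  have hR0 : (0:ℝ) < R := lt_of_lt_of_le one_pos hR
  have hRs : (0:ℝ) < R ^ s := Real.rpow_pos_of_pos hR0 s
  rw [Real.rpow_mul hR0.le]
  rcases h with ⟨hp, hrs⟩ | ⟨hp, hrs⟩
  · exact Real.rpow_le_rpow hr.le hrs hp
  · exact Real.rpow_le_rpow_of_nonpos hRs hrs hp

lemma power_step (R r p s f α D : ℝ) (hR : 1 ≤ R) (hr : 0 < r)
    (h : (0 ≤ p ∧ r ≤ R ^ s) ∨ (p ≤ 0 ∧ R ^ s ≤ r))
    (hexp : f + s * p ≤ α - D) :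
    r ^ (α + p) * R ^ f ≤ R ^ (α - D) * r ^ α := by
  have hR0 : (0:ℝ) < R := lt_of_lt_of_le one_pos hR
  rw [Real.rpow_add hr]
  calc r ^ α * r ^ p * R ^ f ≤ r ^ α * R ^ (s * p) * R ^ f := by
        have hb := rpow_bridge R r p s hR hr h
        gcongr
    _ = R ^ (s * p + f) * r ^ α := by rw [Real.rpow_add hR0]; ring
    _ ≤ R ^ (α - D) * r ^ α := by
        have := Real.rpow_le_rpow_of_exponent_le hR (by linarith : s * p + f ≤ α - D)
        exact mul_le_mul_of_nonneg_right this (Real.rpow_pos_of_pos hr α).le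

lemma five_bound (a b c A B C M N : ℝ) (h0A : 0 ≤ A) (h0B : 0 ≤ B) (h0C : 0 ≤ C)
    (h0a : 0 ≤ a) (h0b : 0 ≤ b) (h0c : 0 ≤ c)
    (ha : a ≤ 5 * A) (hb : b ≤ 5 * B) (hc : c ≤ 5 * C) (hM : 0 ≤ M) (hN : 0 ≤ N) :
    a ^ M * b ^ N * c ≤ 5 ^ (M + N + 1) * (A ^ M * B ^ N * C) := by
  have h5 : (0:ℝ) < 5 := by norm_num
  have h1 : a ^ M ≤ (5 * A) ^ M := Real.rpow_le_rpow h0a ha hM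
  have h2 : b ^ N ≤ (5 * B) ^ N := Real.rpow_le_rpow h0b hb hN
  have e1 : (5 * A) ^ M = 5 ^ M * A ^ M := Real.mul_rpow h5.le h0A
  have e2 : (5 * B) ^ N = 5 ^ N * B ^ N := Real.mul_rpow h5.le h0B
  calc a ^ M * b ^ N * c ≤ (5 * A) ^ M * (5 * B) ^ N * (5 * C) := by
        gcongr
    _ = 5 ^ (M + N + 1) * (A ^ M * B ^ N * C) := by
        rw [e1, e2, Real.rpow_add h5, Real.rpow_add h5, Real.rpow_one]
        ring

lemma factor_pow (R r : ℝ) (hR : 0 < R) (hr : 0 < r) (a b M : ℝ) :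
    (r ^ a * R ^ b) ^ M = r ^ (a * M) * R ^ (b * M) := by
  rw [Real.mul_rpow (Real.rpow_nonneg hr.le a) (Real.rpow_nonneg hR.le b),
    ← Real.rpow_mul hr.le, ← Real.rpow_mul hR.le]

lemma collect (R r : ℝ) (hR : 0 < R) (hr : 0 < r) (a b c e : ℝ) :
    (r ^ a * R ^ b) * (r ^ c * R ^ e) = r ^ (a + c) * R ^ (b + e) := by
  rw [Real.rpow_add hr, Real.rpow_add hR]; ring

lemma rR_le (R r : ℝ) (hR : 1 ≤ R) (hr : 0 < r) (e f α D s : ℝ)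
    (h : (α ≤ e ∧ r ≤ R ^ s) ∨ (e ≤ α ∧ R ^ s ≤ r))
    (hexp : f + s * (e - α) ≤ α - D) :
    r ^ e * R ^ f ≤ R ^ (α - D) * r ^ α := by
  have hR0 : (0:ℝ) < R := lt_of_lt_of_le one_pos hR
  have he : r ^ e = r ^ α * r ^ (e - α) := by
    rw [← Real.rpow_add hr]; congr 1; ring
  have hb : r ^ (e - α) ≤ R ^ (s * (e - α)) := by
    apply rpow_bridge R r (e - α) s hR hr
    rcases h with ⟨h1, h2⟩ | ⟨h1, h2⟩
    · exact Or.inl ⟨by linarith, h2⟩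
    · exact Or.inr ⟨by linarith, h2⟩
  calc r ^ e * R ^ f = r ^ α * (r ^ (e - α) * R ^ f) := by rw [he]; ring
    _ ≤ r ^ α * (R ^ (s * (e - α)) * R ^ f) := by
        gcongr
    _ = R ^ (s * (e - α) + f) * r ^ α := by rw [Real.rpow_add hR0]; ring
    _ ≤ R ^ (α - D) * r ^ α := by
        have := Real.rpow_le_rpow_of_exponent_le hR (by linarith : s * (e - α) + f ≤ α - D)
        exact mul_le_mul_of_nonneg_right this (Real.rpow_pos_of_pos hr α).le

lemma rR_le' (R r : ℝ) (hR : 1 ≤ R) (hr : 0 < r) (e f α D s : ℝ)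
    (h : (α ≤ e ∧ r ≤ R ^ s) ∨ (e ≤ α ∧ R ^ s ≤ r))
    (hexp : f + s * (e - α) ≤ α - D) (e' f' : ℝ) (he : e' = e) (hf : f' = f) :
    r ^ e' * R ^ f' ≤ R ^ (α - D) * r ^ α := by
  rw [he, hf]; exact rR_le R r hR hr e f α D s h hexp

lemma scalar_bound (D M α κ R r : ℝ)
    (hR : 1 ≤ R) (hr : 0 < r)
    (hM : 0 ≤ M) (hN : 0 ≤ D - M - 1)
    (hκ4 : 1/4 ≤ κ) (hκ2 : κ ≤ 1/2)
    (hκeq : κ * (D - M - 1) = (D - α - 1) / 2)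
    (hMα : M ≤ α) (hαD1 : α ≤ D - 1) (hDMα : D - M ≤ α) :
    (min r (R ^ (-(1:ℝ)/2))) ^ M
      * (min r (R ^ (-(1:ℝ)) + 2 * (r + R ^ (-(1:ℝ))) * R ^ (-κ))) ^ (D - M - 1)
      * min r (R ^ (-(1:ℝ)) + 2 * (r + R ^ (-(1:ℝ))) * R ^ (-(2*κ)))
      ≤ 5 ^ D * (R ^ (α - D) * r ^ α) := by
  have hR0 : (0:ℝ) < R := lt_of_lt_of_le one_pos hR
  have pinv : (0:ℝ) < R ^ (-(1:ℝ)) := Real.rpow_pos_of_pos hR0 _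
  have phalf : (0:ℝ) < R ^ (-(1:ℝ)/2) := Real.rpow_pos_of_pos hR0 _
  have pκ : (0:ℝ) < R ^ (-κ) := Real.rpow_pos_of_pos hR0 _
  have p2κ : (0:ℝ) < R ^ (-(2*κ)) := Real.rpow_pos_of_pos hR0 _
  have pκ1 : (0:ℝ) < R ^ (κ-1) := Real.rpow_pos_of_pos hR0 _
  have p2κ1 : (0:ℝ) < R ^ (2*κ-1) := Real.rpow_pos_of_pos hR0 _
  have hmono : ∀ {s t : ℝ}, s ≤ t → R ^ s ≤ R ^ t :=
    fun h => Real.rpow_le_rpow_of_exponent_le hR h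
  have hco : ∀ s t u : ℝ, s + t = u → R ^ s * R ^ t = R ^ u := by
    intro s t u h
    rw [← Real.rpow_add hR0, h]
  have o1 : R ^ (-(1:ℝ)) ≤ R ^ (κ-1) := hmono (by linarith)
  have o2 : R ^ (κ-1) ≤ R ^ (-(1:ℝ)/2) := hmono (by linarith)
  have o3 : R ^ (-(1:ℝ)/2) ≤ R ^ (2*κ-1) := hmono (by linarith)
  have er0 : r ^ (0:ℝ) = 1 := Real.rpow_zero r
  have er1 : r ^ (1:ℝ) = r := Real.rpow_one r
  set g1 := min r (R ^ (-(1:ℝ)/2)) with hg1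
  set g2 := min r (R ^ (-(1:ℝ)) + 2 * (r + R ^ (-(1:ℝ))) * R ^ (-κ)) with hg2
  set g3 := min r (R ^ (-(1:ℝ)) + 2 * (r + R ^ (-(1:ℝ))) * R ^ (-(2*κ))) with hg3
  have g1n : 0 ≤ g1 := le_min hr.le phalf.le
  have g2n : 0 ≤ g2 := le_min hr.le (by positivity)
  have g3n : 0 ≤ g3 := le_min hr.le (by positivity)
  have h5D : (0:ℝ) ≤ 5 ^ D := Real.rpow_nonneg (by norm_num) D
  have hDexp : M + (D - M - 1) + 1 = D := by ring
  rcases le_or_gt r (R ^ (-(1:ℝ))) with hc1 | hc1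
  · -- Case C1 : r ≤ R^{-1}
    refine le_trans (five_bound g1 g2 g3 (r ^ (1:ℝ) * R ^ (0:ℝ)) (r ^ (1:ℝ) * R ^ (0:ℝ))
      (r ^ (1:ℝ) * R ^ (0:ℝ)) M (D - M - 1)
      (by positivity) (by positivity) (by positivity) g1n g2n g3n ?_ ?_ ?_ hM hN) ?_
    · rw [er1, Real.rpow_zero, mul_one]; exact (min_le_left _ _).trans (by linarith)
    · rw [er1, Real.rpow_zero, mul_one]; exact (min_le_left _ _).trans (by linarith)
    · rw [er1, Real.rpow_zero, mul_one]; exact (min_le_left _ _).trans (by linarith)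
    · rw [hDexp]
      refine mul_le_mul_of_nonneg_left ?_ h5D
      rw [factor_pow R r hR0 hr, factor_pow R r hR0 hr, collect R r hR0 hr,
        collect R r hR0 hr]
      exact rR_le' R r hR hr D 0 α D (-(1:ℝ)) (Or.inl ⟨by linarith, hc1⟩)
        (by linarith) _ _ (by ring) (by ring)
  · rcases le_or_gt r (R ^ (κ-1)) with hc2 | hc2
    · -- Case C2 : R^{-1} < r ≤ R^{κ-1}
      have f1 : r * R ^ (-κ) ≤ R ^ (-(1:ℝ)) := by
        calc r * R ^ (-κ) ≤ R ^ (κ-1) * R ^ (-κ) := mul_le_mul_of_nonneg_right hc2 pκ.le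
          _ = R ^ (-(1:ℝ)) := hco _ _ _ (by ring)
      have f2 : R ^ (-(1:ℝ)) * R ^ (-κ) ≤ R ^ (-(1:ℝ)) := by
        rw [hco _ _ (-(1:ℝ)-κ) rfl]; exact hmono (by linarith)
      have f3 : r * R ^ (-(2*κ)) ≤ R ^ (-(1:ℝ)) := by
        calc r * R ^ (-(2*κ)) ≤ R ^ (κ-1) * R ^ (-(2*κ)) :=
              mul_le_mul_of_nonneg_right hc2 p2κ.le
          _ = R ^ (κ-1+(-(2*κ))) := hco _ _ _ rfl
          _ ≤ R ^ (-(1:ℝ)) := hmono (by linarith)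
      have f4 : R ^ (-(1:ℝ)) * R ^ (-(2*κ)) ≤ R ^ (-(1:ℝ)) := by
        rw [hco _ _ (-(1:ℝ)+(-(2*κ))) rfl]; exact hmono (by linarith)
      refine le_trans (five_bound g1 g2 g3 (r ^ (1:ℝ) * R ^ (0:ℝ))
        (r ^ (0:ℝ) * R ^ (-(1:ℝ))) (r ^ (0:ℝ) * R ^ (-(1:ℝ)))
        M (D - M - 1)
        (by positivity) (by positivity) (by positivity) g1n g2n g3n ?_ ?_ ?_ hM hN) ?_
      · rw [er1, Real.rpow_zero, mul_one]; exact (min_le_left _ _).trans (by linarith)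
      · rw [er0, one_mul]
        refine (min_le_right _ _).trans ?_
        have expand : 2 * (r + R ^ (-(1:ℝ))) * R ^ (-κ)
            = 2 * (r * R ^ (-κ)) + 2 * (R ^ (-(1:ℝ)) * R ^ (-κ)) := by ring
        linarith
      · rw [er0, one_mul]
        refine (min_le_right _ _).trans ?_
        have expand : 2 * (r + R ^ (-(1:ℝ))) * R ^ (-(2*κ))
            = 2 * (r * R ^ (-(2*κ))) + 2 * (R ^ (-(1:ℝ)) * R ^ (-(2*κ))) := by ring
        linarith
      · rw [hDexp]
        refine mul_le_mul_of_nonneg_left ?_ h5D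
        rw [factor_pow R r hR0 hr, factor_pow R r hR0 hr, collect R r hR0 hr,
          collect R r hR0 hr]
        exact rR_le' R r hR hr M (M - D) α D (-(1:ℝ)) (Or.inr ⟨hMα, hc1.le⟩)
          (by linarith) _ _ (by ring) (by ring)
    · -- now r > R^{κ-1}
      have f5 : R ^ (-(1:ℝ)) ≤ r * R ^ (-κ) := by
        calc R ^ (-(1:ℝ)) = R ^ (κ-1) * R ^ (-κ) := (hco _ _ _ (by ring)).symm
          _ ≤ r * R ^ (-κ) := mul_le_mul_of_nonneg_right hc2.le pκ.le
      have g2bound : g2 ≤ 5 * (r ^ (1:ℝ) * R ^ (-κ)) := by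
        rw [er1]
        refine (min_le_right _ _).trans ?_
        have f6 : R ^ (-(1:ℝ)) * R ^ (-κ) ≤ r * R ^ (-κ) :=
          mul_le_mul_of_nonneg_right (by linarith [o1.trans hc2.le] : R ^ (-(1:ℝ)) ≤ r) pκ.le
        have expand : 2 * (r + R ^ (-(1:ℝ))) * R ^ (-κ)
            = 2 * (r * R ^ (-κ)) + 2 * (R ^ (-(1:ℝ)) * R ^ (-κ)) := by ring
        linarith
      rcases le_or_gt r (R ^ (-(1:ℝ)/2)) with hc3 | hc3
      · -- Case C3 : R^{κ-1} < r ≤ R^{-1/2}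
        have f7 : r * R ^ (-(2*κ)) ≤ R ^ (-(1:ℝ)) := by
          calc r * R ^ (-(2*κ)) ≤ R ^ (2*κ-1) * R ^ (-(2*κ)) :=
                mul_le_mul_of_nonneg_right (hc3.trans o3) p2κ.le
            _ = R ^ (-(1:ℝ)) := hco _ _ _ (by ring)
        have f8 : R ^ (-(1:ℝ)) * R ^ (-(2*κ)) ≤ R ^ (-(1:ℝ)) := by
          rw [hco _ _ (-(1:ℝ)+(-(2*κ))) rfl]; exact hmono (by linarith)
        refine le_trans (five_bound g1 g2 g3 (r ^ (1:ℝ) * R ^ (0:ℝ))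
          (r ^ (1:ℝ) * R ^ (-κ)) (r ^ (0:ℝ) * R ^ (-(1:ℝ)))
          M (D - M - 1)
          (by positivity) (by positivity) (by positivity) g1n g2n g3n ?_ g2bound ?_ hM hN) ?_
        · rw [er1, Real.rpow_zero, mul_one]; exact (min_le_left _ _).trans (by linarith)
        · rw [er0, one_mul]
          refine (min_le_right _ _).trans ?_
          have expand : 2 * (r + R ^ (-(1:ℝ))) * R ^ (-(2*κ))
              = 2 * (r * R ^ (-(2*κ))) + 2 * (R ^ (-(1:ℝ)) * R ^ (-(2*κ))) := by ring
          linarith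
        · rw [hDexp]
          refine mul_le_mul_of_nonneg_left ?_ h5D
          rw [factor_pow R r hR0 hr, factor_pow R r hR0 hr, collect R r hR0 hr,
            collect R r hR0 hr]
          exact rR_le' R r hR hr (D - 1) (-κ*(D-M-1) - 1) α D (-(1:ℝ)/2)
            (Or.inl ⟨by linarith, hc3⟩) (by linarith [hκeq]) _ _ (by ring) (by ring)
      · -- r > R^{-1/2}
        have hrhalf : R ^ (-(1:ℝ)/2) ≤ r := hc3.le
        rcases le_or_gt r (R ^ (2*κ-1)) with hc4 | hc4
        · -- Case C5 : R^{-1/2} < r ≤ R^{2κ-1}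
          have f7 : r * R ^ (-(2*κ)) ≤ R ^ (-(1:ℝ)) := by
            calc r * R ^ (-(2*κ)) ≤ R ^ (2*κ-1) * R ^ (-(2*κ)) :=
                  mul_le_mul_of_nonneg_right hc4 p2κ.le
              _ = R ^ (-(1:ℝ)) := hco _ _ _ (by ring)
          have f8 : R ^ (-(1:ℝ)) * R ^ (-(2*κ)) ≤ R ^ (-(1:ℝ)) := by
            rw [hco _ _ (-(1:ℝ)+(-(2*κ))) rfl]; exact hmono (by linarith)
          refine le_trans (five_bound g1 g2 g3 (r ^ (0:ℝ) * R ^ (-(1:ℝ)/2))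
            (r ^ (1:ℝ) * R ^ (-κ)) (r ^ (0:ℝ) * R ^ (-(1:ℝ)))
            M (D - M - 1)
            (by positivity) (by positivity) (by positivity) g1n g2n g3n ?_ g2bound ?_ hM hN) ?_
          · rw [er0, one_mul]; exact (min_le_right _ _).trans (by linarith)
          · rw [er0, one_mul]
            refine (min_le_right _ _).trans ?_
            have expand : 2 * (r + R ^ (-(1:ℝ))) * R ^ (-(2*κ))
                = 2 * (r * R ^ (-(2*κ))) + 2 * (R ^ (-(1:ℝ)) * R ^ (-(2*κ))) := by ring
            linarith
          · rw [hDexp]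
            refine mul_le_mul_of_nonneg_left ?_ h5D
            rw [factor_pow R r hR0 hr, factor_pow R r hR0 hr, collect R r hR0 hr,
              collect R r hR0 hr]
            exact rR_le' R r hR hr (D - M - 1) (-(1:ℝ)/2*M - κ*(D-M-1) - 1) α D (-(1:ℝ)/2)
              (Or.inr ⟨by linarith, hrhalf⟩) (by linarith [hκeq]) _ _ (by ring) (by ring)
        · -- Case C6 : r > R^{2κ-1}
          have f9 : R ^ (-(1:ℝ)) ≤ r * R ^ (-(2*κ)) := by
            calc R ^ (-(1:ℝ)) = R ^ (2*κ-1) * R ^ (-(2*κ)) := (hco _ _ _ (by ring)).symm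
              _ ≤ r * R ^ (-(2*κ)) := mul_le_mul_of_nonneg_right hc4.le p2κ.le
          have f10 : R ^ (-(1:ℝ)) * R ^ (-(2*κ)) ≤ r * R ^ (-(2*κ)) :=
            mul_le_mul_of_nonneg_right (by linarith [o1.trans (o2.trans hrhalf)]) p2κ.le
          refine le_trans (five_bound g1 g2 g3 (r ^ (0:ℝ) * R ^ (-(1:ℝ)/2))
            (r ^ (1:ℝ) * R ^ (-κ)) (r ^ (1:ℝ) * R ^ (-(2*κ)))
            M (D - M - 1)
            (by positivity) (by positivity) (by positivity) g1n g2n g3n ?_ g2bound ?_ hM hN) ?_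
          · rw [er0, one_mul]; exact (min_le_right _ _).trans (by linarith)
          · rw [er1]
            refine (min_le_right _ _).trans ?_
            have expand : 2 * (r + R ^ (-(1:ℝ))) * R ^ (-(2*κ))
                = 2 * (r * R ^ (-(2*κ))) + 2 * (R ^ (-(1:ℝ)) * R ^ (-(2*κ))) := by ring
            linarith
          · rw [hDexp]
            refine mul_le_mul_of_nonneg_left ?_ h5D
            rw [factor_pow R r hR0 hr, factor_pow R r hR0 hr, collect R r hR0 hr,
              collect R r hR0 hr]
            exact rR_le' R r hR hr (D - M) (-(1:ℝ)/2*M - κ*(D-M-1) - 2*κ) α D (-(1:ℝ)/2)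
              (Or.inr ⟨by linarith, hrhalf⟩) (by linarith [hκeq]) _ _ (by ring) (by ring)


lemma prod_range_three (dd mm : ℕ) (h : mm + 2 ≤ dd) (A B C : ℝ) :
    ∏ i ∈ Finset.range dd, (if i < mm then A else if i < dd - 1 then B else C)
      = A ^ mm * B ^ (dd - 1 - mm) * C := by
  obtain ⟨e, rfl⟩ : ∃ e, dd = e + 1 := ⟨dd - 1, by omega⟩
  rw [Finset.prod_range_succ]
  have hfe : (if e < mm then A else if e < e + 1 - 1 then B else C) = C := by
    rw [if_neg (by omega), if_neg (by omega)]
  rw [hfe]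
  have hcong : ∏ i ∈ Finset.range e, (if i < mm then A else if i < e + 1 - 1 then B else C)
      = ∏ i ∈ Finset.range e, (if i < mm then A else B) := by
    refine Finset.prod_congr rfl fun i hi => ?_
    have hi' := Finset.mem_range.mp hi
    split_ifs with h1 h2 <;> first | rfl | omega
  rw [hcong, Finset.prod_ite]
  have h1 : Finset.filter (fun i => i < mm) (Finset.range e) = Finset.range mm := by
    ext i; simp only [Finset.mem_filter, Finset.mem_range]; omega
  have h2 : Finset.filter (fun i => ¬ i < mm) (Finset.range e) = Finset.Ico mm e := by
    ext i; simp only [Finset.mem_filter, Finset.mem_range, Finset.mem_Ico]; omega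
  rw [h1, h2, Finset.prod_const, Finset.prod_const, Finset.card_range, Nat.card_Ico]
  have : e + 1 - 1 - mm = e - mm := by omega
  rw [this]

lemma ball_inter_bound (d m : ℕ) (hm : m ≤ d) (hd : 0 < d) (hmd : m + 2 ≤ d)
    (κ R r : ℝ) (hR : 1 ≤ R) (hr : 0 < r)
    (x : EuclideanSpace ℝ (Fin d)) :
    volume (ball x r ∩ LambdaP d m hm hd κ R)
      ≤ ENNReal.ofReal ((2:ℝ)^d * ((min r (R ^ (-(1:ℝ)/2))) ^ (m:ℝ)
          * (min r (R ^ (-(1:ℝ)) + 2*(r + R ^ (-(1:ℝ)))*R ^ (-κ))) ^ ((d:ℝ)-m-1)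
          * min r (R ^ (-(1:ℝ)) + 2*(r + R ^ (-(1:ℝ)))*R ^ (-(2*κ))))) := by
  have hR0 : (0:ℝ) < R := lt_of_lt_of_le one_pos hR
  have hπ : (0:ℝ) < π := Real.pi_pos
  set ε : ℝ := 1/1000 * R ^ (-(1:ℝ)) with hεdef
  have hεpos : 0 < ε := by positivity
  have hεle : ε ≤ R ^ (-(1:ℝ)) := by
    have : (0:ℝ) < R ^ (-(1:ℝ)) := Real.rpow_pos_of_pos hR0 _
    rw [hεdef]; nlinarith
  set a2 : ℝ := R ^ (κ-1) with ha2
  set a3 : ℝ := 1/(2*π) * R ^ (2*κ-1) with ha3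
  have ha2p : 0 < a2 := Real.rpow_pos_of_pos hR0 _
  have ha3p : 0 < a3 := by
    rw [ha3]; positivity
  set g1 : ℝ := min r (R ^ (-(1:ℝ)/2)) with hg1
  set g2 : ℝ := min r (R ^ (-(1:ℝ)) + 2*(r + R ^ (-(1:ℝ)))*R ^ (-κ)) with hg2
  set g3 : ℝ := min r (R ^ (-(1:ℝ)) + 2*(r + R ^ (-(1:ℝ)))*R ^ (-(2*κ))) with hg3
  have g1n : 0 ≤ g1 := le_min hr.le (Real.rpow_pos_of_pos hR0 _).le
  have g2n : 0 ≤ g2 := le_min hr.le (by positivity)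
  have g3n : 0 ≤ g3 := le_min hr.le (by positivity)
  set Gn : ℕ → ℝ := fun n => if n < m then g1 else if n < d - 1 then g2 else g3 with hGn
  set I : Fin d → Set ℝ := fun i =>
    Set.Ioo (x i - r) (x i + r) ∩
      (if (i:ℕ) < m then Set.Ioo (-(1/1000 * R ^ (-(1:ℝ)/2))) (1/1000 * R ^ (-(1:ℝ)/2))
       else if (i:ℕ) < d - 1 then ⋃ t : ℤ, ball (a2 * t) ε
       else ⋃ t : ℤ, ball (a3 * t) ε) with hI
  have hImeas : ∀ i, MeasurableSet (I i) := by
    intro i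
    refine measurableSet_Ioo.inter ?_
    split_ifs
    · exact measurableSet_Ioo
    · exact MeasurableSet.iUnion fun t => measurableSet_ball
    · exact MeasurableSet.iUnion fun t => measurableSet_ball
  have hsub : ball x r ∩ LambdaP d m hm hd κ R ⊆ {y | ∀ i, y i ∈ I i} := by
    rintro y ⟨hyb, hyΛ⟩
    obtain ⟨hy1, hyhead, ⟨ℓ, hyℓ⟩, ⟨k, hyk⟩⟩ := hyΛ
    intro i
    have hdist : |y i - x i| < r := by
      have h1 : ‖y - x‖ < r := by rwa [mem_ball, dist_eq_norm] at hyb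
      have h2 := coord_abs_le_norm (y - x) i
      have h3 : (y - x) i = y i - x i := rfl
      rw [h3] at h2
      linarith
    have hd1 := (abs_lt.mp hdist).1
    have hd2 := (abs_lt.mp hdist).2
    refine ⟨Set.mem_Ioo.mpr ⟨by linarith, by linarith⟩, ?_⟩
    rcases lt_or_ge (i:ℕ) m with him | him
    · rw [if_pos him]
      have h2 := coord_abs_le_norm (headV m hm y) ⟨(i:ℕ), him⟩
      have h3 : (headV m hm y) (⟨(i:ℕ), him⟩ : Fin m) = y i := by
        show y (Fin.castLE hm ⟨(i:ℕ), him⟩) = y i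
        rfl
      rw [h3] at h2
      have habs : |y i| < 1/1000 * R ^ (-(1:ℝ)/2) := lt_of_le_of_lt h2 hyhead
      exact Set.mem_Ioo.mpr ⟨by linarith [(abs_lt.mp habs).1], by linarith [(abs_lt.mp habs).2]⟩
    · rw [if_neg (by omega)]
      rcases lt_or_ge (i:ℕ) (d-1) with hid | hid
      · rw [if_pos hid]
        have hjlt : (i:ℕ) - m < d - m - 1 := by omega
        set j : Fin (d - m - 1) := ⟨(i:ℕ) - m, hjlt⟩ with hjdef
        have h2 := coord_abs_le_norm (midV d m y - R ^ (κ-1) • intVec ℓ) j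
        have h3 : (midV d m y - R ^ (κ-1) • intVec ℓ) j = y i - a2 * (ℓ j : ℝ) := by
          show (midV d m y) j - R ^ (κ-1) * ((intVec ℓ) j) = y i - a2 * (ℓ j : ℝ)
          have h4 : (midV d m y) j = y i := by
            show y ⟨m + ((i:ℕ) - m), _⟩ = y i
            exact congrArg y.ofLp (Fin.ext (by show m + ((i:ℕ) - m) = (i:ℕ); omega))
          rw [h4]
          rfl
        rw [h3] at h2
        refine Set.mem_iUnion.mpr ⟨ℓ j, ?_⟩
        rw [mem_ball, Real.dist_eq]
        exact lt_of_le_of_lt h2 hyℓ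
      · rw [if_neg (by omega)]
        have hieq : i = ⟨d - 1, by omega⟩ := by
          have hlt := i.isLt
          apply Fin.ext
          simp only [Fin.val_mk]
          omega
        refine Set.mem_iUnion.mpr ⟨k, ?_⟩
        rw [mem_ball, Real.dist_eq, hieq]
        exact hyk
  have hcoord : ∀ i : Fin d, volume (I i) ≤ ENNReal.ofReal (2 * Gn (i:ℕ)) := by
    intro i
    show volume (I i) ≤ _
    rw [hI, hGn]
    simp only []
    split_ifs with h1 h2
    · -- head coordinate
      rcases le_total r (R ^ (-(1:ℝ)/2)) with h | h
      · rw [hg1, min_eq_left h]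
        refine le_trans (measure_mono Set.inter_subset_left) ?_
        rw [Real.volume_Ioo]
        exact ENNReal.ofReal_le_ofReal (by linarith)
      · rw [hg1, min_eq_right h]
        refine le_trans (measure_mono Set.inter_subset_right) ?_
        rw [Real.volume_Ioo]
        refine ENNReal.ofReal_le_ofReal ?_
        have hp : (0:ℝ) < R ^ (-(1:ℝ)/2) := Real.rpow_pos_of_pos hR0 _
        nlinarith
    · -- middle coordinate
      refine le_trans (interval_lattice_bound a2 ε (x i) r ha2p hεpos hr) ?_
      refine ENNReal.ofReal_le_ofReal ?_
      have e1 : R ^ ((1:ℝ)-κ) * a2 = 1 := by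
        rw [ha2, ← Real.rpow_add hR0, show (1:ℝ)-κ+(κ-1) = 0 by ring, Real.rpow_zero]
      have e2 : R ^ ((1:ℝ)-κ) * R ^ (-(1:ℝ)) = R ^ (-κ) := by
        rw [← Real.rpow_add hR0]; congr 1; ring
      have hWn : (0:ℝ) ≤ r + R ^ (-(1:ℝ)) := by positivity
      have hRκn : (0:ℝ) ≤ R ^ (-κ) := (Real.rpow_pos_of_pos hR0 _).le
      have hR1κn : (0:ℝ) ≤ R ^ ((1:ℝ)-κ) := (Real.rpow_pos_of_pos hR0 _).le
      have hRin : (0:ℝ) < R ^ (-(1:ℝ)) := Real.rpow_pos_of_pos hR0 _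
      have hdiv : 2*(r+ε)/a2 ≤ 2*(r + R ^ (-(1:ℝ)))*R ^ ((1:ℝ)-κ) := by
        rw [div_le_iff₀ ha2p]
        nlinarith [e1]
      have hL : (2*(r+ε)/a2 + 1)*(2*ε) ≤ 2*(R ^ (-(1:ℝ)) + 2*(r + R ^ (-(1:ℝ)))*R ^ (-κ)) := by
        have step : (2*(r+ε)/a2 + 1)*(2*ε) ≤ (2*(r + R ^ (-(1:ℝ)))*R ^ ((1:ℝ)-κ))*(2*ε) + 2*ε := by
          have := mul_le_mul_of_nonneg_right hdiv (by positivity : (0:ℝ) ≤ 2*ε)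
          nlinarith
        have e3 : (2*(r + R ^ (-(1:ℝ)))*R ^ ((1:ℝ)-κ))*(2*ε)
            = (1/250)*((r + R ^ (-(1:ℝ)))*R ^ (-κ)) := by
          rw [hεdef]
          linear_combination (1/250)*(r + R ^ (-(1:ℝ)))*e2
        rw [e3] at step
        have : ε ≤ R ^ (-(1:ℝ)) := hεle
        nlinarith [mul_nonneg hWn hRκn]
      rcases le_total r (R ^ (-(1:ℝ)) + 2*(r + R ^ (-(1:ℝ)))*R ^ (-κ)) with h | h
      · rw [hg2, min_eq_left h]; exact (min_le_left _ _).trans (by linarith)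
      · rw [hg2, min_eq_right h]; exact (min_le_right _ _).trans hL
    · -- last coordinate
      refine le_trans (interval_lattice_bound a3 ε (x i) r ha3p hεpos hr) ?_
      refine ENNReal.ofReal_le_ofReal ?_
      have e1 : (2*π) * R ^ ((1:ℝ)-2*κ) * a3 = 1 := by
        rw [ha3]
        have : R ^ ((1:ℝ)-2*κ) * R ^ (2*κ-1) = 1 := by
          rw [← Real.rpow_add hR0, show (1:ℝ)-2*κ+(2*κ-1) = 0 by ring, Real.rpow_zero]
        field_simp
        linear_combination this
      have e2 : R ^ ((1:ℝ)-2*κ) * R ^ (-(1:ℝ)) = R ^ (-(2*κ)) := by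
        rw [← Real.rpow_add hR0]; congr 1; ring
      have hWn : (0:ℝ) ≤ r + R ^ (-(1:ℝ)) := by positivity
      have hRκn : (0:ℝ) ≤ R ^ (-(2*κ)) := (Real.rpow_pos_of_pos hR0 _).le
      have hR1κn : (0:ℝ) ≤ R ^ ((1:ℝ)-2*κ) := (Real.rpow_pos_of_pos hR0 _).le
      have hRin : (0:ℝ) < R ^ (-(1:ℝ)) := Real.rpow_pos_of_pos hR0 _
      have hdiv : 2*(r+ε)/a3 ≤ 2*(r + R ^ (-(1:ℝ)))*((2*π)*R ^ ((1:ℝ)-2*κ)) := by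
        rw [div_le_iff₀ ha3p]
        nlinarith [e1]
      have hL : (2*(r+ε)/a3 + 1)*(2*ε) ≤ 2*(R ^ (-(1:ℝ)) + 2*(r + R ^ (-(1:ℝ)))*R ^ (-(2*κ))) := by
        have step : (2*(r+ε)/a3 + 1)*(2*ε)
            ≤ (2*(r + R ^ (-(1:ℝ)))*((2*π)*R ^ ((1:ℝ)-2*κ)))*(2*ε) + 2*ε := by
          have := mul_le_mul_of_nonneg_right hdiv (by positivity : (0:ℝ) ≤ 2*ε)
          nlinarith
        have e3 : (2*(r + R ^ (-(1:ℝ)))*((2*π)*R ^ ((1:ℝ)-2*κ)))*(2*ε)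
            = (π/125)*((r + R ^ (-(1:ℝ)))*R ^ (-(2*κ))) := by
          rw [hεdef]
          linear_combination (π/125)*(r + R ^ (-(1:ℝ)))*e2
        rw [e3] at step
        have hπ4 : π ≤ 4 := by linarith [Real.pi_le_four]
        have : ε ≤ R ^ (-(1:ℝ)) := hεle
        nlinarith [mul_nonneg hWn hRκn]
      rcases le_total r (R ^ (-(1:ℝ)) + 2*(r + R ^ (-(1:ℝ)))*R ^ (-(2*κ))) with h | h
      · rw [hg3, min_eq_left h]; exact (min_le_left _ _).trans (by linarith)
      · rw [hg3, min_eq_right h]; exact (min_le_right _ _).trans hL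
  calc volume (ball x r ∩ LambdaP d m hm hd κ R)
      ≤ volume {y : EuclideanSpace ℝ (Fin d) | ∀ i, y i ∈ I i} := measure_mono hsub
    _ = ∏ i, volume (I i) := volume_pi_set I hImeas
    _ ≤ ∏ i : Fin d, ENNReal.ofReal (2 * Gn (i:ℕ)) := Finset.prod_le_prod' fun i _ => hcoord i
    _ = ENNReal.ofReal (∏ i : Fin d, (2 * Gn (i:ℕ))) := by
        rw [ENNReal.ofReal_prod_of_nonneg]
        intro i _
        have : 0 ≤ Gn (i:ℕ) := by
          rw [hGn]; dsimp only; split_ifs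
          · exact g1n
          · exact g2n
          · exact g3n
        linarith
    _ ≤ _ := by
        refine ENNReal.ofReal_le_ofReal (le_of_eq ?_)
        rw [Finset.prod_mul_distrib, Finset.prod_const, Finset.card_univ, Fintype.card_fin]
        have hprod : ∏ i : Fin d, Gn (i:ℕ) = g1 ^ m * g2 ^ (d - 1 - m) * g3 := by
          rw [Fin.prod_univ_eq_prod_range Gn d, hGn]
          exact prod_range_three d m hmd g1 g2 g3
        rw [hprod]
        have hcast : ((d - 1 - m : ℕ) : ℝ) = (d:ℝ) - m - 1 := by
          have h1 : d - 1 - m = d - (m + 1) := by omega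
          rw [h1, Nat.cast_sub (by omega : m + 1 ≤ d)]
          push_cast; ring
        rw [← Real.rpow_natCast g1 m, ← Real.rpow_natCast g2 (d - 1 - m), hcast]

lemma norm_headV_le {n : ℕ} (m : ℕ) (h : m ≤ n) (x : EuclideanSpace ℝ (Fin n)) :
    ‖headV m h x‖ ≤ ‖x‖ :=
  norm_subvec_le (Fin.castLE h) (Fin.castLE_injective h) x

lemma norm_midV_le (d m : ℕ) (x : EuclideanSpace ℝ (Fin d)) :
    ‖midV d m x‖ ≤ ‖x‖ :=
  norm_subvec_le (fun i => ⟨m + i, by have := i.isLt; omega⟩)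
    (fun a b hab => Fin.ext (by
      have := congrArg Fin.val hab
      simp only [Fin.val_mk] at this
      omega)) x

lemma cube_subset_lambda (d m : ℕ) (hm : m ≤ d) (hd : 0 < d) (κ R : ℝ) (hR : 1 ≤ R)
    (y : EuclideanSpace ℝ (Fin d)) (hy : ‖y‖ < 1/1000 * R ^ (-(1:ℝ))) :
    y ∈ LambdaP d m hm hd κ R := by
  have hR0 : (0:ℝ) < R := lt_of_lt_of_le one_pos hR
  have hRinv_pos : (0:ℝ) < R ^ (-(1:ℝ)) := Real.rpow_pos_of_pos hR0 _
  have hRinv_le : R ^ (-(1:ℝ)) ≤ 1 := Real.rpow_le_one_of_one_le_of_nonpos hR (by norm_num)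
  have hhalf : R ^ (-(1:ℝ)) ≤ R ^ (-(1:ℝ)/2) :=
    Real.rpow_le_rpow_of_exponent_le hR (by norm_num)
  refine ⟨?_, ?_, ⟨fun _ => 0, ?_⟩, ⟨0, ?_⟩⟩
  · rw [mem_ball_zero_iff]
    calc ‖y‖ < 1/1000 * R ^ (-(1:ℝ)) := hy
      _ ≤ 1 := by nlinarith
  · calc ‖headV m hm y‖ ≤ ‖y‖ := norm_headV_le m hm y
      _ < 1/1000 * R ^ (-(1:ℝ)) := hy
      _ ≤ 1/1000 * R ^ (-(1:ℝ)/2) := by nlinarith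
  · have hzero : intVec (fun _ : Fin (d - m - 1) => (0:ℤ)) = 0 := by
      ext j
      show ((0:ℤ):ℝ) = 0
      norm_num
    rw [hzero, smul_zero, sub_zero]
    calc ‖midV d m y‖ ≤ ‖y‖ := norm_midV_le d m y
      _ < 1/1000 * R ^ (-(1:ℝ)) := hy
  · have : (((0:ℤ)):ℝ) = 0 := by norm_num
    rw [this, mul_zero, sub_zero]
    calc |y ⟨d-1, by omega⟩| ≤ ‖y‖ := coord_abs_le_norm y _
      _ < 1/1000 * R ^ (-(1:ℝ)) := hy

theorem stmt19 (d m : ℕ) (hd : 3 ≤ d) (hm1 : d + 1 < 3 * m) (hm2 : 2 * m ≤ d)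
    (α : ℝ) (hα1 : (d : ℝ) - m ≤ α) (hα2 : α ≤ ((d : ℝ) + m - 1) / 2) :
    ∃ c₀ C₀ : ℝ, 0 < c₀ ∧ c₀ ≤ C₀ ∧
      ∀ R : ℝ, 2 ≤ R →
        ENNReal.ofReal (c₀ * R ^ (α - d)) ≤
            cAlpha α (volume.restrict (LambdaP d m (by omega) (by omega)
              (((d : ℝ) - α - 1) / (2 * ((d : ℝ) - m - 1))) R)) ∧
          cAlpha α (volume.restrict (LambdaP d m (by omega) (by omega)
              (((d : ℝ) - α - 1) / (2 * ((d : ℝ) - m - 1))) R)) ≤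
            ENNReal.ofReal (C₀ * R ^ (α - d)) := by
  have hm2n : 2 ≤ m := by omega
  have hmdn : m + 2 ≤ d := by omega
  have hdR : (3:ℝ) ≤ (d:ℝ) := by exact_mod_cast hd
  have hdm1 : (0:ℝ) < (d:ℝ) - m - 1 := by
    have h1 : ((m:ℝ) + 2) ≤ (d:ℝ) := by exact_mod_cast hmdn
    linarith
  have hmR : (2:ℝ) ≤ (m:ℝ) := by exact_mod_cast hm2n
  have h2m : 2*(m:ℝ) ≤ (d:ℝ) := by exact_mod_cast hm2
  have hMα : (m:ℝ) ≤ α := by linarith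
  have hαd1 : α ≤ (d:ℝ) - 1 := by linarith
  set κ : ℝ := ((d : ℝ) - α - 1) / (2 * ((d : ℝ) - m - 1)) with hκdef
  have hκ4 : 1/4 ≤ κ := by
    rw [hκdef, le_div_iff₀ (by linarith)]
    linarith
  have hκ2 : κ ≤ 1/2 := by
    rw [hκdef, div_le_iff₀ (by linarith)]
    linarith
  have hκeq : κ * ((d:ℝ) - m - 1) = ((d:ℝ) - α - 1)/2 := by
    rw [hκdef]
    field_simp
  have hdpos : (0:ℝ) < (d:ℝ) := by linarith
  set c0 : ℝ := (2*(1/1000)/(2*(d:ℝ)))^d * (1/1000:ℝ)^(-α) with hc0def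
  have hc0pos : 0 < c0 := by
    rw [hc0def]
    have h1 : (0:ℝ) < (2*(1/1000)/(2*(d:ℝ))) := by positivity
    exact mul_pos (pow_pos h1 d) (Real.rpow_pos_of_pos (by norm_num) _)
  set C0 : ℝ := max ((2:ℝ)^d * 5^d) c0 with hC0def
  refine ⟨c0, C0, hc0pos, le_max_right _ _, fun R hR => ?_⟩
  have hR1 : (1:ℝ) ≤ R := by linarith
  have hR0 : (0:ℝ) < R := by linarith
  have hRinv_pos : (0:ℝ) < R ^ (-(1:ℝ)) := Real.rpow_pos_of_pos hR0 _
  constructor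
  · -- lower bound
    set r0 : ℝ := 1/1000 * R ^ (-(1:ℝ)) with hr0def
    have hr0 : 0 < r0 := by positivity
    set δ : ℝ := r0 / (2*(d:ℝ)) with hδdef
    have hδpos : 0 < δ := by positivity
    have hcube : ∀ y : EuclideanSpace ℝ (Fin d), (∀ i, y i ∈ Set.Ioo (-δ) δ) → ‖y‖ < r0 := by
      intro y hy
      have hsum : ∑ i, ‖y i‖^2 ≤ (d:ℝ) * δ^2 := by
        calc ∑ i, ‖y i‖^2 ≤ ∑ _i : Fin d, δ^2 := by
              refine Finset.sum_le_sum fun i _ => ?_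
              have h1 := (Set.mem_Ioo.mp (hy i)).1
              have h2 := (Set.mem_Ioo.mp (hy i)).2
              rw [Real.norm_eq_abs, sq_abs]
              nlinarith
          _ = (d:ℝ) * δ^2 := by
              rw [Finset.sum_const, Finset.card_univ, Fintype.card_fin, nsmul_eq_mul]
      have hsq : Real.sqrt ((d:ℝ)) ≤ (d:ℝ) := by
        calc Real.sqrt ((d:ℝ)) ≤ Real.sqrt (((d:ℝ))^2) :=
              Real.sqrt_le_sqrt (by nlinarith)
          _ = (d:ℝ) := Real.sqrt_sq hdpos.le
      calc ‖y‖ = Real.sqrt (∑ i, ‖y i‖^2) := EuclideanSpace.norm_eq y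
        _ ≤ Real.sqrt ((d:ℝ) * δ^2) := Real.sqrt_le_sqrt hsum
        _ = Real.sqrt ((d:ℝ)) * δ := by
            rw [Real.sqrt_mul (by positivity), Real.sqrt_sq hδpos.le]
        _ ≤ (d:ℝ) * δ := mul_le_mul_of_nonneg_right hsq hδpos.le
        _ = r0 / 2 := by rw [hδdef]; field_simp
        _ < r0 := by linarith
    have hQsub : {y : EuclideanSpace ℝ (Fin d) | ∀ i, y i ∈ Set.Ioo (-δ) δ}
        ⊆ ball 0 r0 ∩ LambdaP d m (by omega) (by omega) κ R := by
      intro y hy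
      have hn := hcube y hy
      exact ⟨mem_ball_zero_iff.mpr hn, cube_subset_lambda d m (by omega) (by omega) κ R hR1 y
        (by rw [← hr0def]; exact hn)⟩
    have hQvol : volume {y : EuclideanSpace ℝ (Fin d) | ∀ i, y i ∈ Set.Ioo (-δ) δ}
        = ENNReal.ofReal ((2*δ)^d) := by
      rw [volume_pi_set _ (fun i => measurableSet_Ioo)]
      have h1 : ∀ i : Fin d, volume (Set.Ioo (-δ) δ) = ENNReal.ofReal (2*δ) := by
        intro i
        rw [Real.volume_Ioo]
        congr 1
        ring
      rw [Finset.prod_congr rfl (fun i _ => h1 i), Finset.prod_const, Finset.card_univ,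
        Fintype.card_fin, ← ENNReal.ofReal_pow (by positivity)]
    have hreal : c0 * R ^ (α - (d:ℝ)) * r0^α = (2*δ)^d := by
      have h1 : r0^α = (1/1000:ℝ)^α * R ^ ((-(1:ℝ))*α) := by
        rw [hr0def, Real.mul_rpow (by norm_num) hRinv_pos.le, ← Real.rpow_mul hR0.le]
      have h2 : (1/1000:ℝ)^(-α) * (1/1000:ℝ)^α = 1 := by
        rw [← Real.rpow_add (by norm_num)]
        simp
      have h3 : R ^ (α - (d:ℝ)) * R ^ ((-(1:ℝ))*α) = R ^ (-(d:ℝ)) := by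
        rw [← Real.rpow_add hR0]
        congr 1
        ring
      have h4 : (R ^ (-(1:ℝ)))^(d:ℕ) = R ^ (-(d:ℝ)) := by
        rw [← Real.rpow_natCast (R ^ (-(1:ℝ))) d, ← Real.rpow_mul hR0.le]
        congr 1
        push_cast
        ring
      calc c0 * R ^ (α - (d:ℝ)) * r0^α
          = (2*(1/1000)/(2*(d:ℝ)))^d * ((1/1000:ℝ)^(-α) * (1/1000:ℝ)^α)
            * (R ^ (α - (d:ℝ)) * R ^ ((-(1:ℝ))*α)) := by rw [hc0def, h1]; ring
        _ = (2*(1/1000)/(2*(d:ℝ)))^d * R ^ (-(d:ℝ)) := by rw [h2, h3]; ring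
        _ = (2*δ)^d := by rw [← h4, hδdef, hr0def]; ring
    have hstep : ENNReal.ofReal (c0 * R ^ (α - (d:ℝ)))
        ≤ (volume.restrict (LambdaP d m (by omega) (by omega) κ R)) (ball 0 r0)
          / ENNReal.ofReal (r0^α) := by
      rw [Measure.restrict_apply measurableSet_ball]
      rw [ENNReal.le_div_iff_mul_le
        (Or.inl (ENNReal.ofReal_pos.mpr (by positivity)).ne')
        (Or.inl ENNReal.ofReal_ne_top)]
      calc ENNReal.ofReal (c0 * R ^ (α - (d:ℝ))) * ENNReal.ofReal (r0^α)
          = ENNReal.ofReal (c0 * R ^ (α - (d:ℝ)) * r0^α) :=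
            (ENNReal.ofReal_mul (by positivity)).symm
        _ = ENNReal.ofReal ((2*δ)^d) := by rw [hreal]
        _ = volume {y : EuclideanSpace ℝ (Fin d) | ∀ i, y i ∈ Set.Ioo (-δ) δ} := hQvol.symm
        _ ≤ volume (ball 0 r0 ∩ LambdaP d m (by omega) (by omega) κ R) :=
            measure_mono hQsub
    refine le_trans hstep ?_
    exact le_iSup_of_le 0 (le_iSup_of_le r0 (le_iSup_of_le hr0 le_rfl))
  · -- upper bound
    refine iSup_le fun x => iSup_le fun r => iSup_le fun hr => ?_
    have hkey : (volume.restrict (LambdaP d m (by omega) (by omega) κ R)) (ball x r)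
        ≤ ENNReal.ofReal (((2:ℝ)^d * 5^d) * R ^ (α - (d:ℝ)) * r^α) := by
      rw [Measure.restrict_apply measurableSet_ball]
      refine le_trans (ball_inter_bound d m (by omega) (by omega) hmdn κ R r hR1 hr x) ?_
      refine ENNReal.ofReal_le_ofReal ?_
      have hsc := scalar_bound (d:ℝ) (m:ℝ) α κ R r hR1 hr (by positivity) (by linarith)
        hκ4 hκ2 hκeq hMα hαd1 hα1
      calc (2:ℝ)^d * ((min r (R ^ (-(1:ℝ)/2))) ^ ((m:ℕ):ℝ)
            * (min r (R ^ (-(1:ℝ)) + 2*(r + R ^ (-(1:ℝ)))*R ^ (-κ))) ^ ((d:ℝ)-(m:ℝ)-1)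
            * min r (R ^ (-(1:ℝ)) + 2*(r + R ^ (-(1:ℝ)))*R ^ (-(2*κ))))
          ≤ (2:ℝ)^d * ((5:ℝ) ^ ((d:ℕ):ℝ) * (R ^ (α - (d:ℝ)) * r^α)) :=
            mul_le_mul_of_nonneg_left hsc (by positivity)
        _ = ((2:ℝ)^d * 5^d) * R ^ (α - (d:ℝ)) * r^α := by
            rw [Real.rpow_natCast (5:ℝ) d]
            ring
    refine ENNReal.div_le_of_le_mul ?_
    refine le_trans hkey ?_
    rw [← ENNReal.ofReal_mul (by positivity)]
    refine ENNReal.ofReal_le_ofReal ?_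
    have hle : (2:ℝ)^d * 5^d ≤ C0 := le_max_left _ _
    have hpos : (0:ℝ) ≤ R ^ (α - (d:ℝ)) * r^α := by positivity
    calc ((2:ℝ)^d * 5^d) * R ^ (α - (d:ℝ)) * r^α
        = ((2:ℝ)^d * 5^d) * (R ^ (α - (d:ℝ)) * r^α) := by ring
      _ ≤ C0 * (R ^ (α - (d:ℝ)) * r^α) := mul_le_mul_of_nonneg_right hle hpos
      _ = C0 * R ^ (α - (d:ℝ)) * r^α := by ring
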